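/- arXiv:2602.17735 — 5 statements merged into one kernel-verified Lean document; each statement's English description precedes it below -/
import Mathlib

section
/- For every integer k ≥ 2, the floor of (F_k − 1)·φ equals F_{k+1} − 2, where F_k is the k-th Fibonacci number and φ = (1+√5)/2. -/
noncomputable def goldenRatio' : ℝ := (1 + Real.sqrt 5) / 2

/-! Binet gives `(F_k - 1) φ = F_{k+1} - 2 + (ψ² - ψ^k)` with `ψ = -1/φ`, and since `|ψ| < 1`,
for `k ≥ 2` the error `ψ² - ψ^k` lies in `[0, 2ψ²] ⊆ [0, 1)`. -/

namespace Real

open goldenRatio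

theorem goldenConj_sq_eq_two_sub_goldenRatio : ψ ^ 2 = 2 - φ := by
  rw [goldenConj_sq, ← one_sub_goldenConj]
  ring

theorem goldenConj_sq_lt_half : ψ ^ 2 < 1 / 2 := by
  rw [goldenConj_sq_eq_two_sub_goldenRatio]
  nlinarith [goldenRatio_sq, one_lt_goldenRatio]

theorem abs_goldenConj_lt_one : |ψ| < 1 :=
  abs_lt.mpr ⟨neg_one_lt_goldenConj, goldenConj_neg.trans one_pos⟩

theorem abs_goldenConj_pow_le_sq {n : ℕ} (hn : 2 ≤ n) : |ψ ^ n| ≤ ψ ^ 2 := by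
  rw [abs_pow, ← sq_abs ψ]
  exact pow_le_pow_of_le_one (abs_nonneg ψ) abs_goldenConj_lt_one.le hn

theorem fib_sub_one_mul_goldenRatio (n : ℕ) :
    ((Nat.fib n : ℝ) - 1) * φ = Nat.fib (n + 1) - 2 + (ψ ^ 2 - ψ ^ n) := by
  rw [goldenConj_sq_eq_two_sub_goldenRatio, ← fib_succ_sub_goldenRatio_mul_fib]
  ring

end Real

theorem fib_floor_identity (k : ℕ) (hk : 2 ≤ k) :
    ⌊((Nat.fib k : ℝ) - 1) * goldenRatio'⌋ = (Nat.fib (k + 1) : ℤ) - 2 := by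
  have hpow := abs_le.mp (Real.abs_goldenConj_pow_le_sq hk)
  have hsq := Real.goldenConj_sq_lt_half
  change ⌊((Nat.fib k : ℝ) - 1) * Real.goldenRatio⌋ = _
  rw [Real.fib_sub_one_mul_goldenRatio, Int.floor_eq_iff]
  push_cast
  constructor <;> linarith
end

section
/- Define s : ℕ → ℕ by s(n) = ⌊(n−1)·φ⌋ + 2 where φ = (1+√5)/2. Then for every k ≥ 2, s(F_k) = F_{k+1}, and consequently s iterated m times on F_k equals F_{k+m} for all m ≥ 0. -/
/-- Survivor sequence of the golden sieve on ℕ, in Beatty form: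
`s n = ⌊(n-1)·φ⌋ + 2`. -/
noncomputable def sieveS (n : ℕ) : ℕ := (⌊((n : ℝ) - 1) * goldenRatio'⌋ + 2).toNat

/-!
By Binet, `F (k+1) - φ F k = ψ ^ k`, so `(F k - 1) φ = F (k+1) - (φ + ψ ^ k)`.
For `k ≥ 2` the error `ψ ^ k` lies in `(ψ, ψ ^ 2] = (1 - φ, 2 - φ]`, hence `φ + ψ ^ k ∈ (1, 2]`
and the floor is exactly `F (k+1) - 2`. Iterating `s (F k) = F (k+1)` gives the second claim.
-/

open Real goldenRatio

namespace Real

theorem abs_goldenConj_pow_le_sq_s1 {k : ℕ} (hk : 2 ≤ k) : |ψ ^ k| ≤ ψ ^ 2 := by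
  have habs : |ψ| ≤ 1 := abs_le.2 ⟨neg_one_lt_goldenConj.le, goldenConj_neg.le.trans zero_le_one⟩
  rw [abs_pow, ← sq_abs ψ]
  exact pow_le_pow_of_le_one (abs_nonneg ψ) habs hk

theorem goldenConj_pow_le_sq {k : ℕ} (hk : 2 ≤ k) : ψ ^ k ≤ ψ ^ 2 :=
  (le_abs_self _).trans (abs_goldenConj_pow_le_sq_s1 hk)

theorem goldenConj_lt_pow {k : ℕ} (hk : 2 ≤ k) : ψ < ψ ^ k := by
  have hψ : ψ < -1 / 2 := by
    have : (2 : ℝ) < √5 := by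
      rw [show (2 : ℝ) = √(2 ^ 2) by simp]
      exact Real.sqrt_lt_sqrt (by norm_num) (by norm_num)
    rw [goldenConj]
    linarith
  calc ψ < -(ψ ^ 2) := by linarith [goldenConj_sq]
    _ ≤ -|ψ ^ k| := neg_le_neg (abs_goldenConj_pow_le_sq_s1 hk)
    _ ≤ ψ ^ k := neg_abs_le _

theorem floor_fib_sub_one_mul_goldenRatio {k : ℕ} (hk : 2 ≤ k) :
    ⌊((Nat.fib k : ℝ) - 1) * φ⌋ = (Nat.fib (k + 1) : ℤ) - 2 := by
  have hbinet : ((Nat.fib k : ℝ) - 1) * φ = Nat.fib (k + 1) - (φ + ψ ^ k) := by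
    linarith [fib_succ_sub_goldenRatio_mul_fib k]
  have hlo := goldenConj_lt_pow hk
  have hhi := goldenConj_pow_le_sq hk
  rw [Int.floor_eq_iff, hbinet]
  push_cast
  constructor <;> linarith [goldenConj_sq, one_sub_goldenConj]

end Real

theorem sieveS_fib {k : ℕ} (hk : 2 ≤ k) : sieveS (Nat.fib k) = Nat.fib (k + 1) := by
  rw [sieveS, show goldenRatio' = φ from rfl, floor_fib_sub_one_mul_goldenRatio hk]
  omega

theorem fib_invariance (k : ℕ) (hk : 2 ≤ k) :
    sieveS (Nat.fib k) = Nat.fib (k + 1) ∧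
    ∀ m : ℕ, sieveS^[m] (Nat.fib k) = Nat.fib (k + m) := by
  refine ⟨sieveS_fib hk, fun m => ?_⟩
  induction m with
  | zero => rfl
  | succ m ih =>
    rw [Function.iterate_succ_apply', ih, sieveS_fib (by omega), Nat.add_assoc]
end

section
/- Define a sequence of sets as follows. Let (σ_n) and (δ_n) be strictly increasing sequences of positive integers forming a partition of ℕ (i.e., {σ_n} ⊔ {δ_n} = ℕ), and suppose δ_n = a·σ_n + n + (b−1) for all n ≥ 1, where a ≥ 2 and 0 ≤ b < a are fixed integers. Then for all n ≥ 2, δ_n − δ_{n−1} = a·(σ_n − σ_{n−1}) + 1 ≥ a + 1 ≥ 3, and consequently σ_n − σ_{n−1} ∈ {1, 2} for all n ≥ 2. -/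
/-!
Subtracting the rank identity at two indices `i < j` gives
`δ j - δ i = a (σ j - σ i) + (j - i) ≥ a + 1 ≥ 2`, so no two consecutive integers are both
values of `δ`. If two successive values of `σ` were three or more apart, the two integers just
above the smaller one would be missed by `σ`, hence both be values of `δ`.
-/

open Set

theorem StrictMonoOn.apply_succ_le_of_apply_lt {α : Type*} [LinearOrder α] {f : ℕ → α}
    {s : Set ℕ} (hf : StrictMonoOn f s) {k j : ℕ} (hk : k ∈ s) (hk' : k + 1 ∈ s) (hj : j ∈ s)
    (h : f k < f j) : f (k + 1) ≤ f j :=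
  (hf.le_iff_le hk' hj).2 ((hf.lt_iff_lt hk hj).1 h)

section RankIdentity

variable {a b : ℕ} {σ δ : ℕ → ℕ}

theorem rank_sub_rank (hrank : ∀ n, 1 ≤ n → (δ n : ℤ) = a * σ n + n + ((b : ℤ) - 1))
    {i j : ℕ} (hi : 1 ≤ i) (hj : 1 ≤ j) :
    (δ j : ℤ) - δ i = a * ((σ j : ℤ) - σ i) + ((j : ℤ) - i) := by
  rw [hrank j hj, hrank i hi]
  ring

theorem add_one_le_rank_sub_rank (hσ : StrictMonoOn σ (Ici 1))
    (hrank : ∀ n, 1 ≤ n → (δ n : ℤ) = a * σ n + n + ((b : ℤ) - 1))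
    {i j : ℕ} (hi : 1 ≤ i) (hij : i < j) : (a : ℤ) + 1 ≤ δ j - δ i := by
  have hσij : (1 : ℤ) ≤ σ j - σ i := by
    have := hσ (mem_Ici.2 hi) (mem_Ici.2 (hi.trans hij.le)) hij
    omega
  rw [rank_sub_rank hrank hi (hi.trans hij.le)]
  have hij' : (1 : ℤ) ≤ (j : ℤ) - i := by omega
  nlinarith

theorem rank_add_one_ne (ha : 1 ≤ a) (hσ : StrictMonoOn σ (Ici 1))
    (hrank : ∀ n, 1 ≤ n → (δ n : ℤ) = a * σ n + n + ((b : ℤ) - 1))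
    {i j : ℕ} (hi : 1 ≤ i) (hj : 1 ≤ j) : δ i + 1 ≠ δ j := by
  intro h
  rcases lt_trichotomy i j with hij | rfl | hji
  · have := add_one_le_rank_sub_rank hσ hrank hi hij
    omega
  · omega
  · have := add_one_le_rank_sub_rank hσ hrank hj hji
    omega

end RankIdentity

theorem succ_le_add_two_of_complement {σ δ : ℕ → ℕ} (hσ : StrictMonoOn σ (Ici 1))
    (hcover : ∀ m, 1 ≤ m → ¬ (∃ n, 1 ≤ n ∧ δ n = m) → ∃ n, 1 ≤ n ∧ σ n = m)
    (hδ : ∀ i j, 1 ≤ i → 1 ≤ j → δ i + 1 ≠ δ j) {k : ℕ} (hk : 1 ≤ k) :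
    σ (k + 1) ≤ σ k + 2 := by
  by_contra! hgap
  have hδ_of_gap : ∀ m, σ k < m → m < σ (k + 1) → ∃ n, 1 ≤ n ∧ δ n = m := by
    intro m hkm hmk
    by_contra hno
    obtain ⟨n, hn, rfl⟩ := hcover m (by omega) hno
    have := hσ.apply_succ_le_of_apply_lt (mem_Ici.2 hk) (mem_Ici.2 (by omega)) (mem_Ici.2 hn) hkm
    omega
  obtain ⟨i, hi, hδi⟩ := hδ_of_gap (σ k + 1) (by omega) (by omega)
  obtain ⟨j, hj, hδj⟩ := hδ_of_gap (σ k + 2) (by omega) (by omega)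
  exact hδ i j hi hj (by omega)

theorem two_gap_property_general (a b : ℕ) (ha : 2 ≤ a)
    (σ δ : ℕ → ℕ)
    (hσmono : ∀ m n, 1 ≤ m → m < n → σ m < σ n)
    (hpart : ∀ m : ℕ, 1 ≤ m →
        ((∃ n, 1 ≤ n ∧ σ n = m) ↔ ¬ (∃ n, 1 ≤ n ∧ δ n = m)))
    (hrank : ∀ n, 1 ≤ n → (δ n : ℤ) = a * σ n + n + ((b : ℤ) - 1)) :
    ∀ n, 2 ≤ n →
      ((δ n : ℤ) - δ (n - 1) = a * ((σ n : ℤ) - σ (n - 1)) + 1 ∧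
       (a : ℤ) + 1 ≤ (δ n : ℤ) - δ (n - 1) ∧ (3 : ℤ) ≤ (a : ℤ) + 1 ∧
       ((σ n : ℤ) - σ (n - 1) = 1 ∨ (σ n : ℤ) - σ (n - 1) = 2)) := by
  intro n hn
  obtain ⟨k, hk, rfl⟩ : ∃ k, 1 ≤ k ∧ n = k + 1 := ⟨n - 1, by omega, by omega⟩
  rw [Nat.add_sub_cancel]
  have hσ : StrictMonoOn σ (Ici 1) := fun i hi j _ hij => hσmono i j hi hij
  have hσk : σ k < σ (k + 1) := hσ (mem_Ici.2 hk) (mem_Ici.2 (by omega)) (by omega)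
  have hgap : σ (k + 1) ≤ σ k + 2 :=
    succ_le_add_two_of_complement hσ (fun m hm => (hpart m hm).2)
      (fun i j => rank_add_one_ne (by omega) hσ hrank) hk
  refine ⟨?_, add_one_le_rank_sub_rank hσ hrank hk (by omega), by omega, by omega⟩
  rw [rank_sub_rank hrank hk (by omega)]
  push_cast
  ring

theorem two_gap_property (a b : ℕ) (ha : 2 ≤ a) (hb : b < a)
    (σ δ : ℕ → ℕ)
    (hσmono : ∀ m n, 1 ≤ m → m < n → σ m < σ n)
    (hδmono : ∀ m n, 1 ≤ m → m < n → δ m < δ n)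
    (hσpos : ∀ n, 1 ≤ n → 1 ≤ σ n) (hδpos : ∀ n, 1 ≤ n → 1 ≤ δ n)
    (hpart : ∀ m : ℕ, 1 ≤ m →
        ((∃ n, 1 ≤ n ∧ σ n = m) ↔ ¬ (∃ n, 1 ≤ n ∧ δ n = m)))
    (hrank : ∀ n, 1 ≤ n → (δ n : ℤ) = a * σ n + n + ((b : ℤ) - 1)) :
    ∀ n, 2 ≤ n →
      ((δ n : ℤ) - δ (n - 1) = a * ((σ n : ℤ) - σ (n - 1)) + 1 ∧
       (a : ℤ) + 1 ≤ (δ n : ℤ) - δ (n - 1) ∧ (3 : ℤ) ≤ (a : ℤ) + 1 ∧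
       ((σ n : ℤ) - σ (n - 1) = 1 ∨ (σ n : ℤ) - σ (n - 1) = 2)) :=
  two_gap_property_general a b ha σ δ hσmono hpart hrank
end

section
/- Let a ≥ 2, 0 ≤ b < a, and let (σ_n), (δ_n) be strictly increasing sequences partitioning ℕ with δ_n = a·σ_n + n + (b−1) for all n ≥ 1. Set c = b − 1. Then for every n ≥ 2, the integer δ_n − 1 is a survivor (i.e., belongs to {σ_k}), it is the (δ_n − n)-th survivor, and hence σ_{a·σ_n + c} = a·σ_n + n + c − 1. -/
/-!
Since `δ (n + 1) - δ n = a (σ (n + 1) - σ n) + 1 ≥ a + 1`, the integer `N = δ n - 1` lies strictly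
between two consecutive values of `δ`, so it is not deleted and equals `σ K` for some `K`. Every
integer in `[1, N]` is either one of the `n - 1` values `δ 1, …, δ (n - 1)` or one of the `K` values
`σ 1, …, σ K`, hence `N = (n - 1) + K`, i.e. `K = δ n - n`, and `δ n - n = a σ n + b - 1` by the
defining relation.
-/

open Finset

section ComplementarySequences

variable {σ δ : ℕ → ℕ}

lemma not_exists_eq_of_lt_of_lt (hδ : StrictMonoOn δ (Set.Ici 1)) {m N : ℕ} (hm : 1 ≤ m)
    (hlo : δ m < N) (hhi : N < δ (m + 1)) : ¬ ∃ j, 1 ≤ j ∧ δ j = N := by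
  rintro ⟨j, hj, rfl⟩
  rcases le_or_gt j m with hjm | hjm
  · exact (hlo.trans_le ((hδ.le_iff_le hj hm).2 hjm)).false
  · exact (hhi.trans_le ((hδ.le_iff_le (by simp) hj).2 hjm)).false

variable (hδpos : ∀ n, 1 ≤ n → 1 ≤ δ n)
  (hpart : ∀ m : ℕ, 1 ≤ m → ((∃ n, 1 ≤ n ∧ σ n = m) ↔ ¬ (∃ n, 1 ≤ n ∧ δ n = m)))
include hδpos hpart

lemma disjoint_image_image (m K : ℕ) : Disjoint ((Icc 1 m).image δ) ((Icc 1 K).image σ) := by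
  refine disjoint_left.2 fun x hxδ hxσ => ?_
  simp only [mem_image, mem_Icc] at hxδ hxσ
  obtain ⟨j, ⟨hj, -⟩, rfl⟩ := hxδ
  obtain ⟨i, ⟨hi, -⟩, hix⟩ := hxσ
  exact (hpart _ (hδpos j hj)).1 ⟨i, hi, hix⟩ ⟨j, hj, rfl⟩

variable (hσ : StrictMonoOn σ (Set.Ici 1)) (hδ : StrictMonoOn δ (Set.Ici 1))
  (hσpos : ∀ n, 1 ≤ n → 1 ≤ σ n)
include hσ hδ hσpos

lemma Icc_eq_image_union_image {m K : ℕ} (hm : 1 ≤ m) (hK : 1 ≤ K) (hlo : δ m < σ K)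
    (hhi : σ K < δ (m + 1)) :
    Icc 1 (σ K) = (Icc 1 m).image δ ∪ (Icc 1 K).image σ := by
  ext x
  simp only [mem_Icc, mem_union, mem_image]
  constructor
  · rintro ⟨hx, hxK⟩
    by_cases hxδ : ∃ j, 1 ≤ j ∧ δ j = x
    · obtain ⟨j, hj, rfl⟩ := hxδ
      refine .inl ⟨j, ⟨hj, ?_⟩, rfl⟩
      by_contra! hjm
      exact (hxK.trans_lt hhi).not_ge ((hδ.le_iff_le (by simp) hj).2 hjm)
    · obtain ⟨j, hj, rfl⟩ := (hpart x hx).2 hxδ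
      exact .inr ⟨j, ⟨hj, (hσ.le_iff_le hj hK).1 hxK⟩, rfl⟩
  · rintro (⟨j, ⟨hj, hjm⟩, rfl⟩ | ⟨j, ⟨hj, hjK⟩, rfl⟩)
    · exact ⟨hδpos j hj, ((hδ.le_iff_le hj hm).2 hjm).trans hlo.le⟩
    · exact ⟨hσpos j hj, (hσ.le_iff_le hj hK).2 hjK⟩

lemma eq_add_of_lt_of_lt {m K : ℕ} (hm : 1 ≤ m) (hK : 1 ≤ K) (hlo : δ m < σ K)
    (hhi : σ K < δ (m + 1)) : σ K = m + K := by
  have hIcc : ∀ {f : ℕ → ℕ}, StrictMonoOn f (Set.Ici 1) → ∀ k, Set.InjOn f ↑(Icc 1 k) :=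
    fun hf _ => hf.injOn.mono fun x hx => (mem_Icc.1 (mem_coe.1 hx)).1
  calc σ K = #(Icc 1 (σ K)) := by simp
    _ = m + K := by
      rw [Icc_eq_image_union_image hδpos hpart hσ hδ hσpos hm hK hlo hhi,
        card_union_of_disjoint (disjoint_image_image hδpos hpart m K),
        card_image_of_injOn (hIcc hδ m), card_image_of_injOn (hIcc hσ K)]
      simp

end ComplementarySequences

lemma add_one_eq_of_rank {a b : ℕ} {σ δ : ℕ → ℕ}
    (hrank : ∀ n, 1 ≤ n → (δ n : ℤ) = a * σ n + n + ((b : ℤ) - 1)) {n : ℕ} (hn : 1 ≤ n) :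
    δ n + 1 = a * σ n + n + b := by
  have := hrank n hn
  omega

lemma add_add_one_le_of_rank {a b : ℕ} {σ δ : ℕ → ℕ} (hσ : StrictMonoOn σ (Set.Ici 1))
    (hrank : ∀ n, 1 ≤ n → (δ n : ℤ) = a * σ n + n + ((b : ℤ) - 1)) {m : ℕ} (hm : 1 ≤ m) :
    δ m + a + 1 ≤ δ (m + 1) := by
  have hσm : σ m + 1 ≤ σ (m + 1) := hσ (Set.mem_Ici.2 hm) (by simp) (by omega)
  have hmul : a * σ m + a ≤ a * σ (m + 1) := by
    simpa only [mul_add, mul_one] using Nat.mul_le_mul_left a hσm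
  have := add_one_eq_of_rank hrank hm
  have := add_one_eq_of_rank hrank (by omega : 1 ≤ m + 1)
  omega

theorem self_referential_identity_general (a b : ℕ) (ha : 2 ≤ a)
    (σ δ : ℕ → ℕ)
    (hσmono : ∀ m n, 1 ≤ m → m < n → σ m < σ n)
    (hδmono : ∀ m n, 1 ≤ m → m < n → δ m < δ n)
    (hσpos : ∀ n, 1 ≤ n → 1 ≤ σ n) (hδpos : ∀ n, 1 ≤ n → 1 ≤ δ n)
    (hpart : ∀ m : ℕ, 1 ≤ m →
        ((∃ n, 1 ≤ n ∧ σ n = m) ↔ ¬ (∃ n, 1 ≤ n ∧ δ n = m)))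
    (hrank : ∀ n, 1 ≤ n → (δ n : ℤ) = a * σ n + n + ((b : ℤ) - 1)) :
    ∀ n, 2 ≤ n →
      ((∃ k, 1 ≤ k ∧ σ k = δ n - 1) ∧
       σ (δ n - n) = δ n - 1 ∧
       (σ (a * σ n + b - 1) : ℤ) = a * σ n + n + ((b : ℤ) - 1) - 1) := by
  intro n hn
  obtain ⟨m, rfl⟩ : ∃ m, n = m + 1 := ⟨n - 1, by omega⟩
  have hm : 1 ≤ m := by omega
  have hσ : StrictMonoOn σ (Set.Ici 1) := fun i hi j _ hij => hσmono i j hi hij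
  have hδ : StrictMonoOn δ (Set.Ici 1) := fun i hi j _ hij => hδmono i j hi hij
  have hgap := add_add_one_le_of_rank hσ hrank hm
  have hlo : δ m < δ (m + 1) - 1 := by omega
  have hhi : δ (m + 1) - 1 < δ (m + 1) := by omega
  obtain ⟨K, hK, hKN⟩ := (hpart _ (by omega)).2 (not_exists_eq_of_lt_of_lt hδ hm hlo hhi)
  have hcount := eq_add_of_lt_of_lt hδpos hpart hσ hδ hσpos hm hK (hKN ▸ hlo) (hKN ▸ hhi)
  have hKval : δ (m + 1) - (m + 1) = K := by omega
  have hrank' := add_one_eq_of_rank hrank (by omega : 1 ≤ m + 1)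
  have hidx : a * σ (m + 1) + b - 1 = K := by omega
  refine ⟨⟨K, hK, hKN⟩, hKval ▸ hKN, ?_⟩
  rw [hidx, hKN]
  omega

theorem self_referential_identity (a b : ℕ) (ha : 2 ≤ a) (hb : b < a)
    (σ δ : ℕ → ℕ)
    (hσmono : ∀ m n, 1 ≤ m → m < n → σ m < σ n)
    (hδmono : ∀ m n, 1 ≤ m → m < n → δ m < δ n)
    (hσpos : ∀ n, 1 ≤ n → 1 ≤ σ n) (hδpos : ∀ n, 1 ≤ n → 1 ≤ δ n)
    (hpart : ∀ m : ℕ, 1 ≤ m →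
        ((∃ n, 1 ≤ n ∧ σ n = m) ↔ ¬ (∃ n, 1 ≤ n ∧ δ n = m)))
    (hrank : ∀ n, 1 ≤ n → (δ n : ℤ) = a * σ n + n + ((b : ℤ) - 1)) :
    ∀ n, 2 ≤ n →
      ((∃ k, 1 ≤ k ∧ σ k = δ n - 1) ∧
       σ (δ n - n) = δ n - 1 ∧
       (σ (a * σ n + b - 1) : ℤ) = a * σ n + n + ((b : ℤ) - 1) - 1) :=
  self_referential_identity_general a b ha σ δ hσmono hδmono hσpos hδpos hpart hrank
end

section
/- Let (μ_n) and (λ_n) be strictly increasing sequences of positive integers partitioning ℕ, with μ_1 = 2, λ_1 = 1, and λ_n = μ_n² + (n−1) for all n ≥ 2. Suppose further that λ_n − λ_{n−1} ≥ 5 for all n ≥ 3. Then for every n ≥ 2: μ_{μ_n² − 1} = μ_n² + n − 2 and μ_{μ_n²} = λ_n + 1. -/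
/-!
Call the values of `μ` survivors and those of `λ` deletions. If `m` lies strictly between `λ N`
and `λ (N + 1)`, then `m` is a survivor and exactly `N` of the numbers `1, …, m` are deletions,
so `m` is the `(m - N)`-th survivor. Take `m = λ n - 1`, `N = n - 1` (the gap condition keeps
`λ (n - 1)` below `m`) and `m = λ n + 1`, `N = n`, and rewrite with `λ n = μ n ^ 2 + (n - 1)`.
-/

open Finset

open scoped Classical in
noncomputable def valuesUpTo (f : ℕ → ℕ) (m : ℕ) : Finset ℕ :=
  {x ∈ Icc 1 m | ∃ k, 1 ≤ k ∧ f k = x}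

section Enumeration

variable {f : ℕ → ℕ}

theorem valuesUpTo_eq_image (hf : StrictMonoOn f (Set.Ici 1)) (hpos : ∀ k, 1 ≤ k → 1 ≤ f k)
    {K m : ℕ} (hK : f K ≤ m) (hm : m < f (K + 1)) :
    valuesUpTo f m = (Icc 1 K).image f := by
  ext x
  simp only [valuesUpTo, mem_filter, mem_image, mem_Icc]
  constructor
  · rintro ⟨⟨-, hxm⟩, k, hk, rfl⟩
    refine ⟨k, ⟨hk, ?_⟩, rfl⟩
    by_contra! hKk
    have := hf.monotoneOn (Set.mem_Ici.2 (by omega)) (Set.mem_Ici.2 hk) (show K + 1 ≤ k by omega)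
    omega
  · rintro ⟨k, ⟨hk, hkK⟩, rfl⟩
    have := hf.monotoneOn (Set.mem_Ici.2 hk) (Set.mem_Ici.2 (hk.trans hkK)) hkK
    exact ⟨⟨hpos k hk, by omega⟩, k, hk, rfl⟩

theorem card_valuesUpTo (hf : StrictMonoOn f (Set.Ici 1)) (hpos : ∀ k, 1 ≤ k → 1 ≤ f k)
    {K m : ℕ} (hK : f K ≤ m) (hm : m < f (K + 1)) :
    #(valuesUpTo f m) = K := by
  rw [valuesUpTo_eq_image hf hpos hK hm,
    card_image_of_injOn (hf.injOn.mono fun k hk => (mem_Icc.1 hk).1), Nat.card_Icc]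
  omega

theorem not_exists_eq_of_lt_of_lt_s17 (hf : StrictMonoOn f (Set.Ici 1)) {N m : ℕ}
    (hlow : f N < m) (hhigh : m < f (N + 1)) : ¬ ∃ k, 1 ≤ k ∧ f k = m := by
  rintro ⟨k, hk, rfl⟩
  rcases le_or_gt k N with hkN | hNk
  · have := hf.monotoneOn (Set.mem_Ici.2 hk) (Set.mem_Ici.2 (hk.trans hkN)) hkN
    omega
  · have := hf.monotoneOn (Set.mem_Ici.2 (by omega)) (Set.mem_Ici.2 hk) (show N + 1 ≤ k by omega)
    omega

end Enumeration

section Complementary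

variable {μ lam : ℕ → ℕ}

open scoped Classical in
theorem card_valuesUpTo_add_card_valuesUpTo
    (hpart : ∀ m, 1 ≤ m → ((∃ n, 1 ≤ n ∧ μ n = m) ↔ ¬ ∃ n, 1 ≤ n ∧ lam n = m))
    (m : ℕ) :
    #(valuesUpTo μ m) + #(valuesUpTo lam m) = m := by
  have hlam : valuesUpTo lam m = {x ∈ Icc 1 m | ¬ ∃ k, 1 ≤ k ∧ μ k = x} := by
    ext x
    simp only [valuesUpTo, mem_filter, mem_Icc, and_congr_right_iff]
    exact fun hx => by rw [hpart x hx.1, not_not]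
  rw [hlam, valuesUpTo, card_filter_add_card_filter_not, Nat.card_Icc, Nat.add_sub_cancel]

theorem apply_sub_eq_of_lt_of_lt
    (hpart : ∀ m, 1 ≤ m → ((∃ n, 1 ≤ n ∧ μ n = m) ↔ ¬ ∃ n, 1 ≤ n ∧ lam n = m))
    (hμ : StrictMonoOn μ (Set.Ici 1)) (hlam : StrictMonoOn lam (Set.Ici 1))
    (hμpos : ∀ k, 1 ≤ k → 1 ≤ μ k) (hlampos : ∀ k, 1 ≤ k → 1 ≤ lam k)
    {N m : ℕ} (hlow : lam N < m) (hhigh : m < lam (N + 1)) :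
    μ (m - N) = m := by
  obtain ⟨K, hK, rfl⟩ := (hpart m (by omega)).2 (not_exists_eq_of_lt_of_lt_s17 hlam hlow hhigh)
  have hcardμ : #(valuesUpTo μ (μ K)) = K :=
    card_valuesUpTo hμ hμpos le_rfl (hμ (Set.mem_Ici.2 hK) (Set.mem_Ici.2 (by omega)) (by omega))
  have hcardlam : #(valuesUpTo lam (μ K)) = N := card_valuesUpTo hlam hlampos hlow.le hhigh
  have hsum := card_valuesUpTo_add_card_valuesUpTo hpart (μ K)
  rw [show μ K - N = K by omega]

end Complementary

theorem squares_nested_identity_general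
    (μ lam : ℕ → ℕ)
    (hμmono : ∀ m n, 1 ≤ m → m < n → μ m < μ n)
    (hlammono : ∀ m n, 1 ≤ m → m < n → lam m < lam n)
    (hlam1 : lam 1 = 1)
    (hμpos : ∀ n, 1 ≤ n → 1 ≤ μ n) (hlampos : ∀ n, 1 ≤ n → 1 ≤ lam n)
    (hpart : ∀ m : ℕ, 1 ≤ m →
        ((∃ n, 1 ≤ n ∧ μ n = m) ↔ ¬ (∃ n, 1 ≤ n ∧ lam n = m)))
    (hrank : ∀ n, 2 ≤ n → lam n = (μ n)^2 + (n - 1))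
    (hgap : ∀ n, 3 ≤ n → 5 ≤ lam n - lam (n - 1)) :
    ∀ n, 2 ≤ n →
      μ ((μ n)^2 - 1) = (μ n)^2 + n - 2 ∧ μ ((μ n)^2) = lam n + 1 := by
  intro n hn
  have hμ : StrictMonoOn μ (Set.Ici 1) := fun a ha b _ hab => hμmono a b ha hab
  have hlam : StrictMonoOn lam (Set.Ici 1) := fun a ha b _ hab => hlammono a b ha hab
  have hμn : 2 ≤ μ n := by have := hμmono 1 n le_rfl (by omega); have := hμpos 1 le_rfl; omega
  have hsq : 4 ≤ μ n ^ 2 := by nlinarith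
  have hlamn := hrank n hn
  have hprev : lam (n - 1) < lam n - 1 := by
    rcases (show n = 2 ∨ 3 ≤ n by omega) with rfl | hn3
    · change lam 1 < lam 2 - 1
      omega
    · have := hgap n hn3; have := hlammono (n - 1) n (by omega) (by omega); omega
  have hnext : lam n + 1 < lam (n + 1) := by
    have hsucc := hrank (n + 1) (by omega)
    have := Nat.pow_lt_pow_left (hμmono n (n + 1) (by omega) (by omega)) two_ne_zero
    simp only [Nat.add_sub_cancel] at hsucc
    omega
  have h1 := apply_sub_eq_of_lt_of_lt hpart hμ hlam hμpos hlampos hprev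
    (by rw [Nat.sub_add_cancel (by omega)]; omega)
  have h2 := apply_sub_eq_of_lt_of_lt hpart hμ hlam hμpos hlampos (by omega) hnext
  rw [show lam n - 1 - (n - 1) = μ n ^ 2 - 1 by omega,
    show lam n - 1 = μ n ^ 2 + n - 2 by omega] at h1
  rw [show lam n + 1 - n = μ n ^ 2 by omega] at h2
  exact ⟨h1, h2⟩

theorem squares_nested_identity
    (μ lam : ℕ → ℕ)
    (hμmono : ∀ m n, 1 ≤ m → m < n → μ m < μ n)
    (hlammono : ∀ m n, 1 ≤ m → m < n → lam m < lam n)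
    (hμ1 : μ 1 = 2) (hlam1 : lam 1 = 1)
    (hμpos : ∀ n, 1 ≤ n → 1 ≤ μ n) (hlampos : ∀ n, 1 ≤ n → 1 ≤ lam n)
    (hpart : ∀ m : ℕ, 1 ≤ m →
        ((∃ n, 1 ≤ n ∧ μ n = m) ↔ ¬ (∃ n, 1 ≤ n ∧ lam n = m)))
    (hrank : ∀ n, 2 ≤ n → lam n = (μ n)^2 + (n - 1))
    (hgap : ∀ n, 3 ≤ n → 5 ≤ lam n - lam (n - 1)) :
    ∀ n, 2 ≤ n →
      μ ((μ n)^2 - 1) = (μ n)^2 + n - 2 ∧ μ ((μ n)^2) = lam n + 1 :=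
  squares_nested_identity_general μ lam hμmono hlammono hlam1 hμpos hlampos hpart hrank hgap
end
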